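/- Let p > 1 be real and let c, β be real numbers with c² ≥ 1 and β < 2√((3p+5)(p−1)(c²−1))/(p+3). If φ : ℝ → ℝ is a Schwartz function satisfying the solitary-wave equation φ''''(x) + βφ''(x) + (1−c²)φ(x) = |φ(x)|^{p−1}φ(x) for all x ∈ ℝ, then φ is identically zero. -/

import Mathlib

open MeasureTheory Filter SchwartzMap

namespace NES

variable (g h : SchwartzMap ℝ ℝ)

lemma tendsto_atTop (g : SchwartzMap ℝ ℝ) : Tendsto g atTop (nhds 0) :=
  (zero_at_infty g).mono_left (by rw [cocompact_eq_atBot_atTop (α := ℝ)]; exact le_sup_right)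

lemma tendsto_atBot (g : SchwartzMap ℝ ℝ) : Tendsto g atBot (nhds 0) :=
  (zero_at_infty g).mono_left (by rw [cocompact_eq_atBot_atTop (α := ℝ)]; exact le_sup_left)

lemma bounded (g : SchwartzMap ℝ ℝ) : ∃ C, ∀ x, ‖g x‖ ≤ C := by
  obtain ⟨C, -, hC⟩ := g.decay 0 0
  exact ⟨C, fun x => by simpa using hC x⟩

lemma integrable_mul (g h : SchwartzMap ℝ ℝ) : Integrable (fun x => g x * h x) := by
  obtain ⟨C, hC⟩ := bounded g
  exact (h.integrable).bdd_mul g.continuous.aestronglyMeasurable (Eventually.of_forall hC)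

lemma integrable_id_mul (g h : SchwartzMap ℝ ℝ) :
    Integrable (fun x => x * (g x * h x)) := by
  obtain ⟨C, hC⟩ := bounded h
  have hCnn : 0 ≤ C := le_trans (norm_nonneg _) (hC 0)
  have base : Integrable (fun x : ℝ => C * (‖x‖ ^ 1 * ‖g x‖)) :=
    (g.integrable_pow_mul volume 1).const_mul C
  refine Integrable.mono' base ?_ ?_
  · exact (continuous_id.mul (g.continuous.mul h.continuous)).aestronglyMeasurable
  · filter_upwards with x
    have : ‖x * (g x * h x)‖ = ‖x‖ * (‖g x‖ * ‖h x‖) := by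
      simp [abs_mul]
    rw [this]
    calc ‖x‖ * (‖g x‖ * ‖h x‖) ≤ ‖x‖ * (‖g x‖ * C) := by
          gcongr; exact hC x
      _ = C * (‖x‖ ^ 1 * ‖g x‖) := by ring

lemma tendsto_mul_atTop (g h : SchwartzMap ℝ ℝ) :
    Tendsto (fun x => g x * h x) atTop (nhds 0) := by
  obtain ⟨C, hC⟩ := bounded h
  refine squeeze_zero_norm' (Eventually.of_forall fun x => ?_)
    ((tendsto_atTop g).norm.const_mul C |>.mono_right ?_)
  · rw [norm_mul]
    calc ‖g x‖ * ‖h x‖ ≤ ‖g x‖ * C := by gcongr; exact hC x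
      _ = C * ‖g x‖ := mul_comm _ _
  · simp

lemma tendsto_mul_atBot (g h : SchwartzMap ℝ ℝ) :
    Tendsto (fun x => g x * h x) atBot (nhds 0) := by
  obtain ⟨C, hC⟩ := bounded h
  refine squeeze_zero_norm' (Eventually.of_forall fun x => ?_)
    ((tendsto_atBot g).norm.const_mul C |>.mono_right ?_)
  · rw [norm_mul]
    calc ‖g x‖ * ‖h x‖ ≤ ‖g x‖ * C := by gcongr; exact hC x
      _ = C * ‖g x‖ := mul_comm _ _
  · simp

lemma decay2 (g : SchwartzMap ℝ ℝ) : ∃ C, ∀ x : ℝ, ‖x‖ ^ 2 * ‖g x‖ ≤ C := by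
  obtain ⟨C, -, hC⟩ := g.decay 2 0
  exact ⟨C, fun x => by simpa using hC x⟩

lemma tendsto_id_mul (g h : SchwartzMap ℝ ℝ) {l : Filter ℝ}
    (hl : Tendsto (fun x : ℝ => ‖x‖) l atTop) :
    Tendsto (fun x => x * (g x * h x)) l (nhds 0) := by
  obtain ⟨C, hC⟩ := decay2 g
  obtain ⟨D, hD⟩ := bounded h
  have hDnn : 0 ≤ D := le_trans (norm_nonneg _) (hD 0)
  have hCnn : 0 ≤ C := le_trans (by positivity) (hC 0)
  have lim : Tendsto (fun x : ℝ => C * D / ‖x‖) l (nhds 0) :=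
    tendsto_const_nhds.div_atTop hl
  refine squeeze_zero_norm' ?_ lim
  filter_upwards [hl.eventually (eventually_ge_atTop (1:ℝ))] with x hx
  have hx0 : (0:ℝ) < ‖x‖ := lt_of_lt_of_le one_pos hx
  have h1 : ‖x * (g x * h x)‖ = ‖x‖ * ‖g x‖ * ‖h x‖ := by simp [abs_mul, mul_assoc]
  rw [h1]
  have key : ‖x‖ * ‖g x‖ ≤ C / ‖x‖ := by
    rw [le_div_iff₀ hx0]
    calc ‖x‖ * ‖g x‖ * ‖x‖ = ‖x‖ ^ 2 * ‖g x‖ := by ring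
      _ ≤ C := hC x
  calc ‖x‖ * ‖g x‖ * ‖h x‖ ≤ (C / ‖x‖) * D :=
        mul_le_mul key (hD x) (norm_nonneg _) (by positivity)
    _ = C * D / ‖x‖ := by ring

lemma tendsto_id_mul_atTop (g h : SchwartzMap ℝ ℝ) :
    Tendsto (fun x => x * (g x * h x)) atTop (nhds 0) :=
  tendsto_id_mul g h (tendsto_abs_atTop_atTop)

lemma tendsto_id_mul_atBot (g h : SchwartzMap ℝ ℝ) :
    Tendsto (fun x => x * (g x * h x)) atBot (nhds 0) :=
  tendsto_id_mul g h (tendsto_abs_atBot_atTop)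

lemma integral_deriv_eq_zero (H : ℝ → ℝ) (hd : Differentiable ℝ H)
    (hi : Integrable (deriv H)) (ht : Tendsto H atTop (nhds 0))
    (hb : Tendsto H atBot (nhds 0)) : ∫ x, deriv H x = 0 := by
  have t1 : Tendsto (fun i : ℕ => ∫ x in (-(i:ℝ))..(i:ℝ), deriv H x) atTop
      (nhds (∫ x, deriv H x)) :=
    intervalIntegral_tendsto_integral hi
      (tendsto_neg_atBot_iff.mpr tendsto_natCast_atTop_atTop) tendsto_natCast_atTop_atTop
  have t2 : Tendsto (fun i : ℕ => ∫ x in (-(i:ℝ))..(i:ℝ), deriv H x) atTop (nhds 0) := by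
    have he : ∀ i : ℕ, (∫ x in (-(i:ℝ))..(i:ℝ), deriv H x) = H i - H (-(i:ℝ)) := fun i =>
      intervalIntegral.integral_deriv_eq_sub (fun x _ => hd x)
        hi.intervalIntegrable
    rw [show (0:ℝ) = 0 - 0 by ring]
    refine Tendsto.congr (fun i => (he i).symm) ?_
    exact ((ht.comp tendsto_natCast_atTop_atTop).sub
      ((hb.comp (tendsto_neg_atBot_iff.mpr tendsto_natCast_atTop_atTop))))
  exact tendsto_nhds_unique t1 t2


lemma sdiff (g : SchwartzMap ℝ ℝ) : Differentiable ℝ g :=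
  (g.smooth ⊤).differentiable (by norm_cast)

lemma deriv_eq (g : SchwartzMap ℝ ℝ) : deriv g = ⇑(derivCLM ℝ ℝ g) := by
  ext x; rw [derivCLM_apply]

lemma ibp (g h : SchwartzMap ℝ ℝ) :
    ∫ x, deriv (⇑g) x * h x = - ∫ x, g x * deriv (⇑h) x := by
  set g' := derivCLM ℝ ℝ g
  set h' := derivCLM ℝ ℝ h
  have hg' : deriv (⇑g) = ⇑g' := deriv_eq g
  have hh' : deriv (⇑h) = ⇑h' := deriv_eq h
  have hd : Differentiable ℝ (fun x => g x * h x) := (sdiff g).mul (sdiff h)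
  have hderiv : deriv (fun x => g x * h x) = fun x => g' x * h x + g x * h' x := by
    ext x
    rw [show deriv (fun x => g x * h x) x = _ from deriv_mul (sdiff g x) (sdiff h x), hg', hh']
  have hint : Integrable (deriv (fun x => g x * h x)) := by
    rw [hderiv]; exact (integrable_mul g' h).add (integrable_mul g h')
  have h0 : ∫ x, deriv (fun x => g x * h x) x = 0 :=
    integral_deriv_eq_zero _ hd hint (tendsto_mul_atTop g h) (tendsto_mul_atBot g h)
  rw [hderiv] at h0
  rw [integral_add (integrable_mul g' h) (integrable_mul g h')] at h0
  rw [hg', hh']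
  linarith [h0]

lemma wibp (g h : SchwartzMap ℝ ℝ) :
    (∫ x, x * (deriv (⇑g) x * h x)) + (∫ x, x * (g x * deriv (⇑h) x))
      = - ∫ x, g x * h x := by
  set g' := derivCLM ℝ ℝ g
  set h' := derivCLM ℝ ℝ h
  have hg' : deriv (⇑g) = ⇑g' := deriv_eq g
  have hh' : deriv (⇑h) = ⇑h' := deriv_eq h
  have hd : Differentiable ℝ (fun x : ℝ => x * (g x * h x)) :=
    differentiable_id.mul ((sdiff g).mul (sdiff h))
  have hderiv : deriv (fun x : ℝ => x * (g x * h x))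
      = fun x => g x * h x + (x * (g' x * h x) + x * (g x * h' x)) := by
    ext x
    have h1 : HasDerivAt (fun x : ℝ => x * (g x * h x))
        (1 * (g x * h x) + x * (g' x * h x + g x * h' x)) x := by
      exact (hasDerivAt_id x).mul (((sdiff g x).hasDerivAt.mul (sdiff h x).hasDerivAt).congr_deriv
        (by rw [hg', hh']))
    rw [h1.deriv]; ring
  have i1 : Integrable (fun x : ℝ => x * (g' x * h x)) := integrable_id_mul g' h
  have i2 : Integrable (fun x : ℝ => x * (g x * h' x)) := integrable_id_mul g h'
  have i12 : Integrable (fun x : ℝ => x * (g' x * h x) + x * (g x * h' x)) := i1.add i2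
  have hint : Integrable (deriv (fun x : ℝ => x * (g x * h x))) := by
    rw [hderiv]; exact (integrable_mul g h).add i12
  have h0 : ∫ x, deriv (fun x : ℝ => x * (g x * h x)) x = 0 :=
    integral_deriv_eq_zero _ hd hint (tendsto_id_mul_atTop g h) (tendsto_id_mul_atBot g h)
  rw [hderiv] at h0
  simp only at h0
  rw [integral_add (integrable_mul g h) i12, integral_add i1 i2] at h0
  rw [hg', hh']
  linarith [h0]


lemma hasDerivAt_abs_rpow {q : ℝ} (hq : 1 < q) (t : ℝ) :
    HasDerivAt (fun s : ℝ => |s| ^ q) (q * |t| ^ (q - 2) * t) t := by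
  rcases lt_trichotomy t 0 with ht | ht | ht
  · have h1 : HasDerivAt (fun s : ℝ => (-s) ^ q) (q * (-t) ^ (q - 1) * (-1)) t := by
      have := (Real.hasDerivAt_rpow_const (x := -t) (p := q) (Or.inl (by linarith))).comp t
        (hasDerivAt_neg t)
      simpa [mul_comm, Function.comp_def] using this
    have h2 : HasDerivAt (fun s : ℝ => |s| ^ q) (q * (-t) ^ (q - 1) * (-1)) t := by
      refine h1.congr_of_eventuallyEq ?_
      filter_upwards [eventually_lt_nhds ht] with s hs
      rw [abs_of_neg hs]
    convert h2 using 1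
    rw [abs_of_neg ht]
    rw [show q - 1 = q - 2 + 1 by ring, Real.rpow_add (by linarith) , Real.rpow_one]
    ring
  · subst ht
    rw [hasDerivAt_iff_tendsto_slope]
    have hlim : Tendsto (fun s : ℝ => |s| ^ (q - 1)) (nhdsWithin 0 {(0:ℝ)}ᶜ) (nhds 0) := by
      have hc : ContinuousAt (fun s : ℝ => |s| ^ (q - 1)) 0 :=
        (Real.continuousAt_rpow_const _ _ (Or.inr (by linarith))).comp continuous_abs.continuousAt
      have h0 : |(0:ℝ)| ^ (q - 1) = 0 := by
        rw [abs_zero, Real.zero_rpow (by linarith)]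
      have := hc.tendsto
      rw [h0] at this
      exact this.mono_left nhdsWithin_le_nhds
    have heq : ∀ᶠ s in nhdsWithin (0:ℝ) {(0:ℝ)}ᶜ, ‖slope (fun s : ℝ => |s| ^ q) 0 s‖ = |s| ^ (q - 1) := by
      filter_upwards [self_mem_nhdsWithin] with s hs
      have hs0 : s ≠ 0 := hs
      have habs : (0:ℝ) < |s| := abs_pos.mpr hs0
      rw [slope_def_field, div_eq_mul_inv, abs_zero, Real.zero_rpow (by linarith), sub_zero,
        sub_zero, norm_mul, norm_inv, Real.norm_eq_abs, Real.norm_eq_abs,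
        abs_of_pos (Real.rpow_pos_of_pos habs q), Real.rpow_sub habs, Real.rpow_one,
        div_eq_mul_inv]
    have : Tendsto (fun s : ℝ => slope (fun s : ℝ => |s| ^ q) 0 s)
        (nhdsWithin 0 {(0:ℝ)}ᶜ) (nhds 0) := by
      refine squeeze_zero_norm' ?_ hlim
      filter_upwards [heq] with s hs
      exact le_of_eq hs
    convert this using 2
    rw [abs_zero, mul_zero]
  · have h1 : HasDerivAt (fun s : ℝ => s ^ q) (q * t ^ (q - 1)) t :=
      Real.hasDerivAt_rpow_const (Or.inl (ne_of_gt ht))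
    have h2 : HasDerivAt (fun s : ℝ => |s| ^ q) (q * t ^ (q - 1)) t := by
      refine h1.congr_of_eventuallyEq ?_
      filter_upwards [eventually_gt_nhds ht] with s hs
      rw [abs_of_pos hs]
    convert h2 using 1
    rw [abs_of_pos ht, show q - 1 = q - 2 + 1 by ring, Real.rpow_add ht, Real.rpow_one]
    ring

lemma abs_rpow_split {q : ℝ} (hq : 2 < q) (t : ℝ) :
    |t| ^ q = (|t| ^ (q - 2) * t) * t := by
  rcases eq_or_ne t 0 with rfl | ht
  · rw [abs_zero, Real.zero_rpow (by linarith)]; ring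
  · have habs : (0:ℝ) < |t| := abs_pos.mpr ht
    have h2 : t * t = |t| * |t| := (abs_mul_abs_self t).symm
    have h3 : |t| * |t| = |t| ^ (2:ℝ) := by
      rw [show ((2:ℝ)) = ((2:ℕ):ℝ) by norm_num, Real.rpow_natCast]; ring
    rw [mul_assoc, h2, h3, ← Real.rpow_add habs]
    norm_num

lemma nonlinear_ibp (φ ψ : SchwartzMap ℝ ℝ) {q : ℝ} (hq : 2 < q)
    (hpt : ∀ x, ψ x = |φ x| ^ (q - 2) * φ x) :
    (∫ x, ψ x * φ x) + q * ∫ x, x * ((derivCLM ℝ ℝ φ) x * ψ x) = 0 := by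
  set φ1 := derivCLM ℝ ℝ φ with hφ1
  have hd : Differentiable ℝ (fun x : ℝ => x * |φ x| ^ q) := by
    intro x
    exact ((hasDerivAt_id x).mul
      (((hasDerivAt_abs_rpow (by linarith : (1:ℝ) < q) (φ x)).comp x
        (sdiff φ x).hasDerivAt))).differentiableAt
  have hderiv : deriv (fun x : ℝ => x * |φ x| ^ q)
      = fun x => ψ x * φ x + q * (x * (φ1 x * ψ x)) := by
    ext x
    have h1 : HasDerivAt (fun x : ℝ => x * |φ x| ^ q)
        (1 * |φ x| ^ q + x * ((q * |φ x| ^ (q - 2) * φ x) * deriv (⇑φ) x)) x :=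
      (hasDerivAt_id x).mul
        ((hasDerivAt_abs_rpow (by linarith : (1:ℝ) < q) (φ x)).comp x (sdiff φ x).hasDerivAt)
    rw [h1.deriv, hpt x, deriv_eq φ, abs_rpow_split hq]
    ring
  have hint : Integrable (deriv (fun x : ℝ => x * |φ x| ^ q)) := by
    rw [hderiv]
    exact (integrable_mul ψ φ).add ((integrable_id_mul φ1 ψ).const_mul q)
  have htop : Tendsto (fun x : ℝ => x * |φ x| ^ q) atTop (nhds 0) := by
    refine (tendsto_id_mul_atTop ψ φ).congr fun x => ?_
    rw [abs_rpow_split hq, ← hpt x]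
  have hbot : Tendsto (fun x : ℝ => x * |φ x| ^ q) atBot (nhds 0) := by
    refine (tendsto_id_mul_atBot ψ φ).congr fun x => ?_
    rw [abs_rpow_split hq, ← hpt x]
  have h0 : ∫ x, deriv (fun x : ℝ => x * |φ x| ^ q) x = 0 :=
    integral_deriv_eq_zero _ hd hint htop hbot
  rw [hderiv] at h0
  simp only at h0
  rw [integral_add (integrable_mul ψ φ) ((integrable_id_mul φ1 ψ).const_mul q),
    integral_const_mul] at h0
  linarith [h0]


lemma ibp' (g h : SchwartzMap ℝ ℝ) :
    ∫ x, (derivCLM ℝ ℝ g) x * h x = - ∫ x, g x * (derivCLM ℝ ℝ h) x := by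
  have := ibp g h
  rwa [deriv_eq g, deriv_eq h] at this

lemma wibp' (g h : SchwartzMap ℝ ℝ) :
    (∫ x, x * ((derivCLM ℝ ℝ g) x * h x)) + (∫ x, x * (g x * (derivCLM ℝ ℝ h) x))
      = - ∫ x, g x * h x := by
  have := wibp g h
  rwa [deriv_eq g, deriv_eq h] at this

lemma integral_three (f g h : ℝ → ℝ) (a b : ℝ) (hf : Integrable f) (hg : Integrable g)
    (hh : Integrable h) :
    ∫ x, (f x + a * g x + b * h x) = (∫ x, f x) + a * (∫ x, g x) + b * ∫ x, h x := by
  have h1 : Integrable (fun x => f x + a * g x) := hf.add (hg.const_mul a)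
  rw [integral_add h1 (hh.const_mul b), integral_add hf (hg.const_mul a),
    integral_const_mul, integral_const_mul]

lemma eq_zero_of_integral_mul_self_eq_zero (g : SchwartzMap ℝ ℝ)
    (h0 : ∫ x, g x * g x = 0) : ∀ x, g x * g x = 0 := by
  have hae : (fun x => g x * g x) =ᶠ[ae (volume : Measure ℝ)] 0 :=
    (integral_eq_zero_iff_of_nonneg (fun x => mul_self_nonneg _)
      (integrable_mul g g)).mp h0
  have := (Continuous.ae_eq_iff_eq volume (g.continuous.mul g.continuous)
    continuous_const).mp hae
  intro x
  exact congrFun this x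


lemma quad_nonneg {K L M u v : ℝ} (hK : 0 < K) (hL2 : L^2 < 4*(K*M)) :
    0 ≤ K*(u*u) + L*(u*v) + M*(v*v) := by
  nlinarith [sq_nonneg (2*K*u + L*v), sq_nonneg v, sq_nonneg u]

lemma quad_zero {K L M u v : ℝ} (hK : 0 < K) (hL2 : L^2 < 4*(K*M))
    (h0 : K*(u*u) + L*(u*v) + M*(v*v) = 0) : v = 0 := by
  have hv : v * v ≤ 0 := by nlinarith [sq_nonneg (2*K*u + L*v), sq_nonneg v]
  exact mul_self_eq_zero.mp (le_antisymm hv (mul_self_nonneg v))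

lemma integral_three' (f g h : ℝ → ℝ) (a b d : ℝ) (hf : Integrable f) (hg : Integrable g)
    (hh : Integrable h) :
    ∫ x, (a * f x + b * g x + d * h x)
      = a * (∫ x, f x) + b * (∫ x, g x) + d * ∫ x, h x := by
  have h1 : Integrable (fun x => a * f x + b * g x) := (hf.const_mul a).add (hg.const_mul b)
  rw [integral_add h1 (hh.const_mul d), integral_add (hf.const_mul a) (hg.const_mul b),
    integral_const_mul, integral_const_mul, integral_const_mul]

end NES

open MeasureTheory

set_option maxHeartbeats 1000000 in
/-- Nonexistence of nontrivial Schwartz solitary waves when `c² ≥ 1` and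
`β < 2√((3p+5)(p−1)(c²−1))/(p+3)`. -/
theorem nonexistence_supersonic (p c β : ℝ) (hp : 1 < p) (hc : 1 ≤ c ^ 2)
    (hβ : β < 2 * Real.sqrt ((3 * p + 5) * (p - 1) * (c ^ 2 - 1)) / (p + 3))
    (φ : SchwartzMap ℝ ℝ)
    (hφ : ∀ x : ℝ, iteratedDeriv 4 (⇑φ) x + β * iteratedDeriv 2 (⇑φ) x
      + (1 - c ^ 2) * φ x = |φ x| ^ (p - 1) * φ x) :
    ∀ x : ℝ, φ x = 0 := by
  set φ1 := SchwartzMap.derivCLM ℝ ℝ φ with hd1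
  set φ2 := SchwartzMap.derivCLM ℝ ℝ φ1 with hd2
  set φ3 := SchwartzMap.derivCLM ℝ ℝ φ2 with hd3
  set φ4 := SchwartzMap.derivCLM ℝ ℝ φ3 with hd4
  have i2 : iteratedDeriv 2 (⇑φ) = ⇑φ2 := by
    rw [show (2:ℕ) = 1 + 1 from rfl, iteratedDeriv_succ, iteratedDeriv_one,
      NES.deriv_eq φ, ← hd1, NES.deriv_eq φ1, ← hd2]
  have i4 : iteratedDeriv 4 (⇑φ) = ⇑φ4 := by
    rw [show (4:ℕ) = 2 + 1 + 1 from rfl, iteratedDeriv_succ, iteratedDeriv_succ, i2,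
      NES.deriv_eq φ2, ← hd3, NES.deriv_eq φ3, ← hd4]
  set ψ := φ4 + β • φ2 + (1 - c ^ 2) • φ with hdψ
  have hψapp : ∀ y, ψ y = φ4 y + β * φ2 y + (1 - c ^ 2) * φ y := by
    intro y
    rw [hdψ]
    simp [SchwartzMap.add_apply, SchwartzMap.smul_apply, smul_eq_mul]
  have hψ : ∀ y, ψ y = |φ y| ^ (p - 1) * φ y := by
    intro y
    rw [hψapp y, ← i4, ← i2]
    exact hφ y
  -- basic nonnegativity
  have hA : 0 ≤ ∫ x, φ2 x * φ2 x := integral_nonneg fun x => mul_self_nonneg _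
  have hB : 0 ≤ ∫ x, φ1 x * φ1 x := integral_nonneg fun x => mul_self_nonneg _
  have hC : 0 ≤ ∫ x, φ x * φ x := integral_nonneg fun x => mul_self_nonneg _
  -- integration by parts identities
  have r43 := NES.ibp' φ3 φ
  rw [← hd4, ← hd1] at r43
  have r32 := NES.ibp' φ2 φ1
  rw [← hd3, ← hd2] at r32
  have e4 : ∫ x, φ4 x * φ x = ∫ x, φ2 x * φ2 x := by rw [r43, r32]; ring
  have e2 := NES.ibp' φ1 φ
  rw [← hd2, ← hd1] at e2
  have r12 := NES.ibp' φ1 φ2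
  rw [← hd2, ← hd3] at r12
  have w13 := NES.wibp' φ1 φ3
  rw [← hd2, ← hd4] at w13
  have w22 := NES.wibp' φ2 φ2
  rw [← hd3] at w22
  rw [show (fun x : ℝ => x * (φ3 x * φ2 x)) = (fun x : ℝ => x * (φ2 x * φ3 x)) from
    funext fun x => by ring] at w22
  have w11 := NES.wibp' φ1 φ1
  rw [← hd2] at w11
  rw [show (fun x : ℝ => x * (φ2 x * φ1 x)) = (fun x : ℝ => x * (φ1 x * φ2 x)) from
    funext fun x => by ring] at w11
  have w00 := NES.wibp' φ φ
  rw [← hd1] at w00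
  rw [show (fun x : ℝ => x * (φ x * φ1 x)) = (fun x : ℝ => x * (φ1 x * φ x)) from
    funext fun x => by ring] at w00
  have hw4 : ∫ x, x * (φ1 x * φ4 x) = (3/2) * ∫ x, φ2 x * φ2 x := by
    linarith [w13, r12, w22]
  have w11' : ∫ x, x * (φ1 x * φ2 x) = -(1/2) * ∫ x, φ1 x * φ1 x := by linarith [w11]
  have w00' : ∫ x, x * (φ1 x * φ x) = -(1/2) * ∫ x, φ x * φ x := by linarith [w00]
  -- energy identity
  have hDsplit : ∫ x, ψ x * φ x
      = (∫ x, φ4 x * φ x) + β * (∫ x, φ2 x * φ x) + (1 - c ^ 2) * ∫ x, φ x * φ x := by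
    rw [show (fun x : ℝ => ψ x * φ x) = (fun x : ℝ => φ4 x * φ x + β * (φ2 x * φ x)
        + (1 - c ^ 2) * (φ x * φ x)) from funext fun x => by rw [hψapp x]; ring]
    exact NES.integral_three _ _ _ β (1 - c ^ 2) (NES.integrable_mul φ4 φ)
      (NES.integrable_mul φ2 φ) (NES.integrable_mul φ φ)
  have hE : ∫ x, ψ x * φ x = (∫ x, φ2 x * φ2 x) - β * (∫ x, φ1 x * φ1 x)
      + (1 - c ^ 2) * ∫ x, φ x * φ x := by
    linear_combination hDsplit + e4 + β * e2
  -- Pohozaev identity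
  have hQsplit : ∫ x, x * (φ1 x * ψ x)
      = (∫ x, x * (φ1 x * φ4 x)) + β * (∫ x, x * (φ1 x * φ2 x))
        + (1 - c ^ 2) * ∫ x, x * (φ1 x * φ x) := by
    rw [show (fun x : ℝ => x * (φ1 x * ψ x)) = (fun x : ℝ => x * (φ1 x * φ4 x)
        + β * (x * (φ1 x * φ2 x)) + (1 - c ^ 2) * (x * (φ1 x * φ x))) from
      funext fun x => by rw [hψapp x]; ring]
    exact NES.integral_three _ _ _ β (1 - c ^ 2) (NES.integrable_id_mul φ1 φ4)
      (NES.integrable_id_mul φ1 φ2) (NES.integrable_id_mul φ1 φ)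
  have hP : ∫ x, x * (φ1 x * ψ x) = (3/2) * (∫ x, φ2 x * φ2 x)
      - (β/2) * (∫ x, φ1 x * φ1 x) - ((1 - c ^ 2)/2) * ∫ x, φ x * φ x := by
    linear_combination hQsplit + hw4 + β * w11' + (1 - c ^ 2) * w00'
  -- nonlinear identity
  have hNL := NES.nonlinear_ibp φ ψ (q := p + 1) (by linarith)
    (fun x => by rw [show p + 1 - 2 = p - 1 by ring]; exact hψ x)
  rw [← hd1] at hNL
  -- abbreviate the integrals to speed up arithmetic
  set IA := ∫ x, φ2 x * φ2 x with hIA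
  set IB := ∫ x, φ1 x * φ1 x with hIB
  set IC := ∫ x, φ x * φ x with hIC
  set ID := ∫ x, ψ x * φ x with hID
  set IQ := ∫ x, x * (φ1 x * ψ x) with hIQ
  set IE2 := ∫ x, φ2 x * φ x with hIE2
  -- combined identity
  have hComb : (3*p+5) * (∫ x, φ2 x * φ2 x) - β*(p+3) * (∫ x, φ1 x * φ1 x)
      + (p-1)*(c^2-1) * (∫ x, φ x * φ x) = 0 := by
    linear_combination (-2) * hE - 2*(p+1) * hP + 2 * hNL
  have hM : 0 ≤ (p-1)*(c^2-1) := mul_nonneg (by linarith) (by linarith)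
  by_cases hβ0 : β ≤ 0
  · -- β ≤ 0 : forces A = 0, then φ constant, then zero
    have h1 : β*(p+3) * (∫ x, φ1 x * φ1 x) ≤ 0 :=
      mul_nonpos_iff.mpr (Or.inr ⟨mul_nonpos_iff.mpr (Or.inr ⟨hβ0, by linarith⟩), hB⟩)
    have h2 : 0 ≤ (p-1)*(c^2-1) * (∫ x, φ x * φ x) := mul_nonneg hM hC
    have hA0 : IA = 0 := by
      have hle : IA ≤ 0 := by
        by_contra hlt
        push_neg at hlt
        have h3 : 0 < (3*p+5) * IA := mul_pos (by linarith) hlt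
        linarith [hComb, h1, h2]
      exact le_antisymm hle hA
    have hφ2z : ∀ x, φ2 x = 0 := fun x =>
      mul_self_eq_zero.mp (NES.eq_zero_of_integral_mul_self_eq_zero φ2 hA0 x)
    have hB0 : IB = 0 := by
      have : IE2 = 0 := by
        rw [hIE2]
        rw [show (fun x : ℝ => φ2 x * φ x) = (fun _ : ℝ => (0:ℝ)) from
          funext fun x => by rw [hφ2z x]; ring]
        exact integral_zero _ _
      linarith [e2]
    have hφ1z : ∀ x, φ1 x = 0 := fun x =>
      mul_self_eq_zero.mp (NES.eq_zero_of_integral_mul_self_eq_zero φ1 hB0 x)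
    have hder : ∀ x, deriv (⇑φ) x = 0 := fun x => by
      rw [NES.deriv_eq φ, ← hd1]; exact hφ1z x
    have hconst := is_const_of_deriv_eq_zero (NES.sdiff φ) hder
    intro x
    have ht : Filter.Tendsto (⇑φ) Filter.atTop (nhds (φ x)) :=
      Filter.Tendsto.congr (fun y => hconst x y) tendsto_const_nhds
    exact tendsto_nhds_unique ht (NES.tendsto_atTop φ)
  · push_neg at hβ0
    have hS : 0 ≤ (3 * p + 5) * (p - 1) * (c ^ 2 - 1) :=
      mul_nonneg (mul_nonneg (by linarith) (by linarith)) (by linarith)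
    have hL0 : 0 < β * (p + 3) := mul_pos hβ0 (by linarith)
    have hL1 : β * (p + 3) < 2 * Real.sqrt ((3 * p + 5) * (p - 1) * (c ^ 2 - 1)) :=
      (lt_div_iff₀ (by linarith : (0:ℝ) < p + 3)).mp hβ
    have hL2 : (β*(p+3))^2 < 4 * ((3 * p + 5) * (p - 1) * (c ^ 2 - 1)) := by
      have h1 := mul_self_lt_mul_self (le_of_lt hL0) hL1
      have h2 : (2 * Real.sqrt ((3 * p + 5) * (p - 1) * (c ^ 2 - 1)))
          * (2 * Real.sqrt ((3 * p + 5) * (p - 1) * (c ^ 2 - 1)))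
          = 4 * ((3 * p + 5) * (p - 1) * (c ^ 2 - 1)) := by
        have h3 := Real.mul_self_sqrt hS
        nlinarith [h3]
      rw [pow_two]
      linarith
    -- the quadratic-form integrand
    have hGint : Integrable (fun x : ℝ => (3*p+5) * (φ2 x * φ2 x)
        + β*(p+3) * (φ2 x * φ x) + (p-1)*(c^2-1) * (φ x * φ x)) :=
      (((NES.integrable_mul φ2 φ2).const_mul _).add
        ((NES.integrable_mul φ2 φ).const_mul _)).add
        ((NES.integrable_mul φ φ).const_mul _)
    have hGzero : ∫ x, ((3*p+5) * (φ2 x * φ2 x)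
        + β*(p+3) * (φ2 x * φ x) + (p-1)*(c^2-1) * (φ x * φ x)) = 0 := by
      rw [NES.integral_three' _ _ _ (3*p+5) (β*(p+3)) ((p-1)*(c^2-1))
        (NES.integrable_mul φ2 φ2) (NES.integrable_mul φ2 φ) (NES.integrable_mul φ φ)]
      linear_combination hComb + β*(p+3) * e2
    have hL2' : (β*(p+3))^2 < 4 * ((3 * p + 5) * ((p - 1) * (c ^ 2 - 1))) := by
      rw [show (3*p+5) * ((p-1)*(c^2-1)) = (3*p+5)*(p-1)*(c^2-1) by ring]
      exact hL2
    have hKpos : (0:ℝ) < 3*p+5 := by linarith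
    have hGnn : ∀ x : ℝ, 0 ≤ (3*p+5) * (φ2 x * φ2 x)
        + β*(p+3) * (φ2 x * φ x) + (p-1)*(c^2-1) * (φ x * φ x) := fun x =>
      NES.quad_nonneg hKpos hL2' 
    have hGcont : Continuous (fun x : ℝ => (3*p+5) * (φ2 x * φ2 x)
        + β*(p+3) * (φ2 x * φ x) + (p-1)*(c^2-1) * (φ x * φ x)) :=
      ((continuous_const.mul (φ2.continuous.mul φ2.continuous)).add
        (continuous_const.mul (φ2.continuous.mul φ.continuous))).add
        (continuous_const.mul (φ.continuous.mul φ.continuous))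
    have hGae := (integral_eq_zero_iff_of_nonneg hGnn hGint).mp hGzero
    have hGeq := (Continuous.ae_eq_iff_eq volume hGcont continuous_const).mp hGae
    intro x
    have hx : (3*p+5) * (φ2 x * φ2 x) + β*(p+3) * (φ2 x * φ x)
        + (p-1)*(c^2-1) * (φ x * φ x) = 0 := congrFun hGeq x
    exact NES.quad_zero hKpos hL2' hx
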